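/- arXiv:2007.11883 — 3 statements merged into one kernel-verified Lean document; each statement's English description precedes it below -/
import Mathlib

section
/- Let (y_n), n = 0,1,2,..., be a sequence of positive real numbers satisfying y_{n+1} ≤ c·b^n·y_n^{1+α} for all n, where b > 1, c > 0, α > 0. If y_0 ≤ c^{-1/α}·b^{-1/α²}, then lim_{n→∞} y_n = 0. -/
open Filter

/-!
With `M = c^{-1/α} b^{-1/α²}` and `r = b^{-1/α}` one has `c M^α = r` and `b r^α = 1`, hence
`c bⁿ (M rⁿ)^{1+α} = M rⁿ · (c M^α) · (b r^α)ⁿ = M rⁿ⁺¹`: the geometric sequence `M rⁿ` solves the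
recursion with equality, so by induction it dominates `y`, and it tends to `0` because `r < 1`.
-/

theorem le_geometric_of_le_mul_pow_mul_rpow {c b α M r : ℝ} (hc : 0 ≤ c) (hb : 0 ≤ b)
    (hα : 0 ≤ α) (hM : 0 ≤ M) (hr : 0 ≤ r) (hcM : c * M ^ α ≤ r) (hbr : b * r ^ α ≤ 1)
    {y : ℕ → ℝ} (hy : ∀ n, 0 ≤ y n) (hrec : ∀ n, y (n + 1) ≤ c * b ^ n * y n ^ (1 + α))
    (h0 : y 0 ≤ M) (n : ℕ) : y n ≤ M * r ^ n := by
  induction n with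
  | zero => simpa using h0
  | succ n ih =>
    have hMr : 0 ≤ M * r ^ n := by positivity
    have hsplit : c * b ^ n * (M * r ^ n) ^ (1 + α) =
        M * r ^ n * (c * M ^ α) * (b * r ^ α) ^ n := by
      rw [Real.rpow_add' hMr (by linarith), Real.rpow_one, Real.mul_rpow hM (by positivity),
        ← Real.rpow_natCast_mul hr, mul_comm (n : ℝ) α, Real.rpow_mul_natCast hr, mul_pow]
      ring
    calc y (n + 1) ≤ c * b ^ n * y n ^ (1 + α) := hrec n
      _ ≤ c * b ^ n * (M * r ^ n) ^ (1 + α) := by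
        gcongr
        exact hy n
      _ = M * r ^ n * (c * M ^ α) * (b * r ^ α) ^ n := hsplit
      _ ≤ M * r ^ n * r * 1 := by
        gcongr
        exact pow_le_one₀ (by positivity) hbr
      _ = M * r ^ (n + 1) := by ring

theorem mul_rpow_mul_rpow_neg_one_div_eq {b c α : ℝ} (hb : 0 < b) (hc : 0 < c) (hα : α ≠ 0) :
    c * (c ^ (-(1 / α)) * b ^ (-(1 / α ^ 2))) ^ α = b ^ (-(1 / α)) := by
  have hcα : (c ^ (-(1 / α))) ^ α = c⁻¹ := by
    rw [← Real.rpow_mul hc.le, neg_mul, one_div_mul_cancel hα, Real.rpow_neg_one]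
  have hbα : (b ^ (-(1 / α ^ 2))) ^ α = b ^ (-(1 / α)) := by
    rw [← Real.rpow_mul hb.le]
    congr 1
    field_simp
  rw [Real.mul_rpow (by positivity) (by positivity), hcα, hbα, ← mul_assoc,
    mul_inv_cancel₀ hc.ne', one_mul]

theorem stmt_0 (c b α : ℝ) (hb : 1 < b) (hc : 0 < c) (hα : 0 < α)
    (y : ℕ → ℝ) (hy : ∀ n, 0 < y n)
    (hrec : ∀ n, y (n + 1) ≤ c * b ^ n * y n ^ (1 + α))
    (h0 : y 0 ≤ c ^ (-(1 / α)) * b ^ (-(1 / α ^ 2))) :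
    Tendsto y atTop (nhds 0) := by
  have hb0 : 0 < b := one_pos.trans hb
  set r := b ^ (-(1 / α)) with hr
  have hbr : b * r ^ α = 1 := by
    rw [hr, ← Real.rpow_mul hb0.le, neg_mul, one_div_mul_cancel hα.ne', Real.rpow_neg_one,
      mul_inv_cancel₀ hb0.ne']
  have hr1 : r < 1 := Real.rpow_lt_one_of_one_lt_of_neg hb (by simpa using hα)
  have hgeom : Tendsto (fun n ↦ c ^ (-(1 / α)) * b ^ (-(1 / α ^ 2)) * r ^ n) atTop (nhds 0) := by
    simpa only [mul_zero] using
      (tendsto_pow_atTop_nhds_zero_of_lt_one (by positivity) hr1).const_mul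
        (c ^ (-(1 / α)) * b ^ (-(1 / α ^ 2)))
  exact squeeze_zero (fun n ↦ (hy n).le)
    (le_geometric_of_le_mul_pow_mul_rpow hc.le hb0.le hα.le (by positivity) (by positivity)
      (mul_rpow_mul_rpow_neg_one_div_eq hb0 hc hα.ne').le hbr.le (fun n ↦ (hy n).le) hrec h0) hgeom
end

section
/- Let h : [0, T₀] → ℝ be a continuous nonnegative function, and suppose there exist positive numbers ε, δ, b such that h(τ) ≤ ε·h(τ)^{1+δ} + b for every τ ∈ [0, T₀]. If ε ≤ δ^δ / ((b+δ)^δ · (1+δ)^{1+δ}) and h(0) ≤ s₀ where s₀ = (ε(1+δ))^{-1/δ}, then h(τ) ≤ s₀ for every τ ∈ [0, T₀]. -/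
/-!
At the level `s₀ = (ε (1 + δ)) ^ (-1/δ)`, where `s ↦ s - ε s ^ (1 + δ)` is maximal, the smallness
of `ε` gives `ε s₀ ^ (1 + δ) + b < s₀`, so the inequality `h ≤ ε h ^ (1 + δ) + b` excludes the value
`h τ = s₀`. As `h 0 ≤ s₀`, continuity and the intermediate value theorem keep `h` below `s₀`.
-/

open Real Set

theorem le_of_continuousOn_Icc_of_ne {a c s : ℝ} {f : ℝ → ℝ} (hf : ContinuousOn f (Icc a c))
    (ha : f a ≤ s) (hne : ∀ x ∈ Icc a c, f x ≠ s) : ∀ x ∈ Icc a c, f x ≤ s := by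
  intro x hx
  by_contra! hlt
  have hsub : Icc a x ⊆ Icc a c := Icc_subset_Icc le_rfl hx.2
  obtain ⟨y, hy, hys⟩ := intermediate_value_Icc hx.1 (hf.mono hsub) ⟨ha, hlt.le⟩
  exact hne y (hsub hy) hys

theorem rpow_neg_one_div_rpow {x δ : ℝ} (hx : 0 < x) (hδ : δ ≠ 0) :
    (x ^ (-(1 / δ))) ^ δ = x⁻¹ := by
  rw [← rpow_mul hx.le, show -(1 / δ) * δ = -1 by field_simp, rpow_neg_one]

noncomputable def criticalLevel (ε δ : ℝ) : ℝ := (ε * (1 + δ)) ^ (-(1 / δ))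

section CriticalLevel

variable {ε δ : ℝ} (hε : 0 < ε) (hδ : 0 < δ)
include hε hδ

theorem criticalLevel_pos : 0 < criticalLevel ε δ := by
  unfold criticalLevel
  positivity

theorem criticalLevel_rpow : criticalLevel ε δ ^ δ = (ε * (1 + δ))⁻¹ :=
  rpow_neg_one_div_rpow (by positivity) hδ.ne'

theorem mul_criticalLevel_rpow_one_add :
    ε * criticalLevel ε δ ^ (1 + δ) = criticalLevel ε δ / (1 + δ) := by
  rw [rpow_add (criticalLevel_pos hε hδ), rpow_one, criticalLevel_rpow hε hδ]
  field_simp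

theorem le_criticalLevel {b : ℝ} (hb : 0 < b)
    (hεsmall : ε ≤ δ ^ δ / ((b + δ) ^ δ * (1 + δ) ^ (1 + δ))) :
    (b + δ) * (1 + δ) / δ ≤ criticalLevel ε δ := by
  have hεδ : 0 < ε * (1 + δ) := by positivity
  rw [← rpow_le_rpow_iff (by positivity) (criticalLevel_pos hε hδ).le hδ,
    criticalLevel_rpow hε hδ, div_rpow (by positivity) hδ.le,
    mul_rpow (by positivity) (by positivity), le_inv_comm₀ (by positivity) hεδ, inv_div,
    le_div_iff₀ (by positivity)]
  rw [rpow_add (by positivity), rpow_one, le_div_iff₀ (by positivity)] at hεsmall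
  linarith

theorem mul_criticalLevel_rpow_add_lt {b : ℝ} (hb : 0 < b)
    (hεsmall : ε ≤ δ ^ δ / ((b + δ) ^ δ * (1 + δ) ^ (1 + δ))) :
    ε * criticalLevel ε δ ^ (1 + δ) + b < criticalLevel ε δ := by
  have hle := le_criticalLevel hε hδ hb hεsmall
  rw [div_le_iff₀ hδ] at hle
  rw [mul_criticalLevel_rpow_one_add hε hδ, div_add' _ _ _ (by positivity),
    div_lt_iff₀ (by positivity)]
  nlinarith

end CriticalLevel

theorem stmt_2_general (T₀ ε δ b : ℝ) (hε : 0 < ε) (hδ : 0 < δ) (hb : 0 < b)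
    (h : ℝ → ℝ) (hcont : ContinuousOn h (Set.Icc 0 T₀))
    (hineq : ∀ τ ∈ Set.Icc 0 T₀, h τ ≤ ε * h τ ^ (1 + δ) + b)
    (hεsmall : ε ≤ δ ^ δ / ((b + δ) ^ δ * (1 + δ) ^ (1 + δ)))
    (h0 : h 0 ≤ (ε * (1 + δ)) ^ (-(1 / δ))) :
    ∀ τ ∈ Set.Icc 0 T₀, h τ ≤ (ε * (1 + δ)) ^ (-(1 / δ)) := by
  have hlt := mul_criticalLevel_rpow_add_lt hε hδ hb hεsmall
  refine le_of_continuousOn_Icc_of_ne hcont h0 fun τ hτ hτs => ?_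
  have := hineq τ hτ
  rw [hτs] at this
  exact (this.trans_lt hlt).false

theorem stmt_2 (T₀ ε δ b : ℝ) (hT : 0 < T₀) (hε : 0 < ε) (hδ : 0 < δ) (hb : 0 < b)
    (h : ℝ → ℝ) (hcont : ContinuousOn h (Set.Icc 0 T₀))
    (hnonneg : ∀ τ ∈ Set.Icc 0 T₀, 0 ≤ h τ)
    (hineq : ∀ τ ∈ Set.Icc 0 T₀, h τ ≤ ε * h τ ^ (1 + δ) + b)
    (hεsmall : ε ≤ δ ^ δ / ((b + δ) ^ δ * (1 + δ) ^ (1 + δ)))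
    (h0 : h 0 ≤ (ε * (1 + δ)) ^ (-(1 / δ))) :
    ∀ τ ∈ Set.Icc 0 T₀, h τ ≤ (ε * (1 + δ)) ^ (-(1 / δ)) :=
  stmt_2_general T₀ ε δ b hε hδ hb h hcont hineq hεsmall h0
end

section
/- Let ε, δ, b > 0 with ε ≤ δ^δ / ((b+δ)^δ·(1+δ)^{1+δ}), and let f(s) = ε·s^{1+δ} − s + b. Then the equation f(s) = 0 has exactly two solutions 0 < s₁ < s₂ on (0,∞), and s₁ < (ε(1+δ))^{-1/δ} < s₂; moreover f is strictly positive on [0, s₁), strictly negative on (s₁, s₂), and strictly positive on (s₂, ∞). -/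
/-! The derivative `ε (1 + δ) s ^ δ - 1` vanishes only at `m = (ε (1 + δ)) ^ (-1/δ)`, so `f`
decreases on `[0, m]` and increases on `[m, ∞)`. The smallness of `ε` gives
`m ≥ (b + δ)(1 + δ)/δ`, hence `f m = b - δ m / (1 + δ) ≤ -δ`, while `f 0 = b > 0` and
`f (ε ^ (-1/δ)) = b > 0`. The intermediate value theorem gives one root on each side of `m`,
and monotonicity on each side gives uniqueness and the signs. -/

open Real Set

section Valley

variable {g : ℝ → ℝ} {m T : ℝ}

theorem exists_two_roots_of_strictAntiOn_of_strictMonoOn (hm : 0 ≤ m) (hmT : m ≤ T)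
    (hg : ContinuousOn g (Ici 0)) (hanti : StrictAntiOn g (Icc 0 m))
    (hmono : StrictMonoOn g (Ici m)) (h0 : 0 < g 0) (hgm : g m < 0) (hgT : 0 < g T) :
    ∃ s₁ s₂ : ℝ, 0 < s₁ ∧ s₁ < m ∧ m < s₂ ∧ g s₁ = 0 ∧ g s₂ = 0 ∧
      (∀ s, 0 < s → g s = 0 → s = s₁ ∨ s = s₂) ∧
      (∀ s, 0 ≤ s → s < s₁ → 0 < g s) ∧
      (∀ s, s₁ < s → s < s₂ → g s < 0) ∧
      (∀ s, s₂ < s → 0 < g s) := by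
  obtain ⟨s₁, ⟨hs₁0, hs₁m⟩, hgs₁⟩ :=
    intermediate_value_Ioo' hm (hg.mono Icc_subset_Ici_self) ⟨hgm, h0⟩
  obtain ⟨s₂, ⟨hms₂, -⟩, hgs₂⟩ :=
    intermediate_value_Ioo hmT (hg.mono (Icc_subset_Ici_iff hmT |>.2 hm)) ⟨hgm, hgT⟩
  have hs₁ : s₁ ∈ Icc 0 m := ⟨hs₁0.le, hs₁m.le⟩
  have hs₂ : s₂ ∈ Ici m := le_of_lt hms₂
  have pos_left : ∀ s, 0 ≤ s → s < s₁ → 0 < g s := fun s hs hss₁ =>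
    hgs₁ ▸ hanti ⟨hs, (hss₁.trans hs₁m).le⟩ hs₁ hss₁
  have neg_mid : ∀ s, s₁ < s → s < s₂ → g s < 0 := by
    intro s hs₁s hss₂
    rcases le_or_gt s m with hsm | hms
    · exact hgs₁ ▸ hanti hs₁ ⟨(hs₁0.trans hs₁s).le, hsm⟩ hs₁s
    · exact hgs₂ ▸ hmono (le_of_lt hms) hs₂ hss₂
  have pos_right : ∀ s, s₂ < s → 0 < g s := fun s hs₂s =>
    hgs₂ ▸ hmono hs₂ (hs₂.trans hs₂s.le) hs₂s
  refine ⟨s₁, s₂, hs₁0, hs₁m, hms₂, hgs₁, hgs₂, ?_, pos_left, neg_mid, pos_right⟩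
  intro s hs hgs
  rcases lt_trichotomy s s₁ with hss₁ | rfl | hs₁s
  · exact absurd hgs (pos_left s hs.le hss₁).ne'
  · exact .inl rfl
  rcases lt_trichotomy s s₂ with hss₂ | rfl | hs₂s
  · exact absurd hgs (neg_mid s hs₁s hss₂).ne
  · exact .inr rfl
  · exact absurd hgs (pos_right s hs₂s).ne'

end Valley

theorem inv_le_rpow_neg_one_div {c x δ : ℝ} (hc : 0 < c) (hx : 0 < x) (hδ : 0 < δ)
    (hcx : c ≤ x ^ δ) : x⁻¹ ≤ c ^ (-(1 / δ)) := by
  calc x⁻¹ = (x ^ δ) ^ (-(1 / δ)) := by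
        rw [← rpow_mul hx.le, mul_neg, mul_one_div_cancel hδ.ne', rpow_neg_one]
    _ ≤ c ^ (-(1 / δ)) := rpow_le_rpow_of_nonpos hc hcx (by simp [hδ.le])

theorem mul_rpow_neg_one_div_rpow {c δ : ℝ} (hc : 0 < c) (hδ : δ ≠ 0) :
    c * (c ^ (-(1 / δ))) ^ δ = 1 := by
  rw [← rpow_mul hc.le, neg_mul, one_div_mul_cancel hδ, rpow_neg_one, mul_inv_cancel₀ hc.ne']

section PowerMinusLinear

variable {ε δ : ℝ} (b : ℝ)

theorem hasDerivAt_mul_rpow_one_add_sub_add (hδ : 0 ≤ δ) (x : ℝ) :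
    HasDerivAt (fun s => ε * s ^ (1 + δ) - s + b) (ε * (1 + δ) * x ^ δ - 1) x := by
  have h := hasDerivAt_rpow_const (x := x) (p := 1 + δ) (.inr (by linarith))
  rw [add_sub_cancel_left] at h
  rw [mul_assoc]
  exact ((h.const_mul ε).sub (hasDerivAt_id x)).add_const b

theorem continuous_mul_rpow_one_add_sub_add (hδ : 0 ≤ δ) :
    Continuous (fun s => ε * s ^ (1 + δ) - s + b) :=
  continuous_iff_continuousAt.2 fun x =>
    (hasDerivAt_mul_rpow_one_add_sub_add b hδ x).continuousAt

theorem mul_rpow_one_add_sub_add_of_mul_rpow_eq {s c : ℝ} (hs : 0 < s) (hsc : ε * s ^ δ = c) :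
    ε * s ^ (1 + δ) - s + b = b - (1 - c) * s := by
  rw [rpow_add hs, rpow_one, ← hsc]
  ring

variable (hε : 0 < ε) (hδ : 0 < δ)
include hε hδ

theorem strictAntiOn_mul_rpow_one_add_sub_add :
    StrictAntiOn (fun s => ε * s ^ (1 + δ) - s + b) (Icc 0 ((ε * (1 + δ)) ^ (-(1 / δ)))) := by
  have hc : 0 < ε * (1 + δ) := by positivity
  refine strictAntiOn_of_deriv_neg (convex_Icc _ _)
    (continuous_mul_rpow_one_add_sub_add b hδ.le).continuousOn fun x hx => ?_
  rw [interior_Icc] at hx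
  rw [(hasDerivAt_mul_rpow_one_add_sub_add b hδ.le x).deriv]
  have := mul_lt_mul_of_pos_left (rpow_lt_rpow hx.1.le hx.2 hδ) hc
  linarith [mul_rpow_neg_one_div_rpow hc hδ.ne']

theorem strictMonoOn_mul_rpow_one_add_sub_add :
    StrictMonoOn (fun s => ε * s ^ (1 + δ) - s + b) (Ici ((ε * (1 + δ)) ^ (-(1 / δ)))) := by
  have hc : 0 < ε * (1 + δ) := by positivity
  refine strictMonoOn_of_deriv_pos (convex_Ici _)
    (continuous_mul_rpow_one_add_sub_add b hδ.le).continuousOn fun x hx => ?_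
  rw [interior_Ici] at hx
  rw [(hasDerivAt_mul_rpow_one_add_sub_add b hδ.le x).deriv]
  have := mul_lt_mul_of_pos_left (rpow_lt_rpow (by positivity) hx hδ) hc
  linarith [mul_rpow_neg_one_div_rpow hc hδ.ne']

theorem mul_rpow_one_add_sub_add_critical_le (hb : 0 ≤ b)
    (hεsmall : ε ≤ δ ^ δ / ((b + δ) ^ δ * (1 + δ) ^ (1 + δ))) :
    ε * ((ε * (1 + δ)) ^ (-(1 / δ))) ^ (1 + δ) - (ε * (1 + δ)) ^ (-(1 / δ)) + b ≤ -δ := by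
  set m := (ε * (1 + δ)) ^ (-(1 / δ))
  have hc : ε * (1 + δ) ≤ (δ / ((b + δ) * (1 + δ))) ^ δ :=
    calc ε * (1 + δ) ≤ δ ^ δ / ((b + δ) ^ δ * (1 + δ) ^ (1 + δ)) * (1 + δ) :=
          mul_le_mul_of_nonneg_right hεsmall (by positivity)
      _ = (δ / ((b + δ) * (1 + δ))) ^ δ := by
          rw [div_rpow hδ.le (by positivity), mul_rpow (by positivity) (by positivity),
            rpow_add (by positivity), rpow_one]
          field_simp
  have hm : (b + δ) * (1 + δ) / δ ≤ m := by
    simpa only [inv_div] using inv_le_rpow_neg_one_div (by positivity) (by positivity) hδ hc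
  have hεm : ε * m ^ δ = 1 / (1 + δ) := by
    have := mul_rpow_neg_one_div_rpow (by positivity : 0 < ε * (1 + δ)) hδ.ne'
    field_simp
    linarith
  rw [mul_rpow_one_add_sub_add_of_mul_rpow_eq b (by positivity) hεm]
  calc b - (1 - 1 / (1 + δ)) * m = b - δ / (1 + δ) * m := by field_simp; ring
    _ ≤ b - δ / (1 + δ) * ((b + δ) * (1 + δ) / δ) := by gcongr
    _ = -δ := by field_simp; ring

end PowerMinusLinear

theorem stmt_5 (ε δ b : ℝ) (hε : 0 < ε) (hδ : 0 < δ) (hb : 0 < b)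
    (hεsmall : ε ≤ δ ^ δ / ((b + δ) ^ δ * (1 + δ) ^ (1 + δ)))
    (f : ℝ → ℝ) (hf : ∀ s, 0 ≤ s → f s = ε * s ^ (1 + δ) - s + b) :
    ∃ s₁ s₂ : ℝ, 0 < s₁ ∧ s₁ < s₂ ∧ f s₁ = 0 ∧ f s₂ = 0 ∧
      (∀ s, 0 < s → f s = 0 → s = s₁ ∨ s = s₂) ∧
      s₁ < (ε * (1 + δ)) ^ (-(1 / δ)) ∧ (ε * (1 + δ)) ^ (-(1 / δ)) < s₂ ∧
      (∀ s, 0 ≤ s → s < s₁ → 0 < f s) ∧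
      (∀ s, s₁ < s → s < s₂ → f s < 0) ∧
      (∀ s, s₂ < s → 0 < f s) := by
  set m := (ε * (1 + δ)) ^ (-(1 / δ))
  have hm : 0 < m := by positivity
  have hfg : EqOn f (fun s => ε * s ^ (1 + δ) - s + b) (Ici 0) := hf
  set T := ε ^ (-(1 / δ))
  have hmT : m < T := rpow_lt_rpow_of_neg hε (by nlinarith) (by simpa using hδ)
  have hfT : f T = b := by
    rw [hf T (by positivity), mul_rpow_one_add_sub_add_of_mul_rpow_eq b (by positivity)
      (mul_rpow_neg_one_div_rpow hε hδ.ne'), sub_self, zero_mul, sub_zero]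
  obtain ⟨s₁, s₂, hs₁, hs₁m, hms₂, hfs₁, hfs₂, hroots, hpos₁, hneg, hpos₂⟩ :=
    exists_two_roots_of_strictAntiOn_of_strictMonoOn hm.le hmT.le
      ((continuous_mul_rpow_one_add_sub_add b hδ.le).continuousOn.congr hfg)
      ((strictAntiOn_mul_rpow_one_add_sub_add b hε hδ).congr
        (hfg.symm.mono Icc_subset_Ici_self))
      ((strictMonoOn_mul_rpow_one_add_sub_add b hε hδ).congr
        (hfg.symm.mono (Ici_subset_Ici.2 hm.le)))
      (by simpa [hf 0 le_rfl, zero_rpow (by positivity : 1 + δ ≠ 0)] using hb)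
      (by linarith [hf m hm.le, mul_rpow_one_add_sub_add_critical_le b hε hδ hb.le hεsmall])
      (hfT ▸ hb)
  exact ⟨s₁, s₂, hs₁, hs₁m.trans hms₂, hfs₁, hfs₂, hroots, hs₁m, hms₂, hpos₁, hneg, hpos₂⟩
end
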